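/- arXiv:1908.04673 — 6 statements merged into one kernel-verified Lean document; each statement's English description precedes it below -/
import Mathlib

section
/- A permutation τ of length n contains a pattern π of length k if and only if there exists a valid embedding f from the point set S_π to the point set S_τ, i.e., a map f such that for every point p of S_π, the image of the left (resp. right) index-neighbor of p has strictly smaller (resp. larger) x-coordinate than f(p), and the image of the value-predecessor (resp. value-successor) of p has strictly smaller (resp. larger) y-coordinate than f(p), whenever those neighbors exist. -/
lemma step_sm {k : ℕ} {α : Type*} [Preorder α] {g : Fin k → α}
    (h : ∀ i j : Fin k, (j : ℕ) = (i : ℕ) + 1 → g i < g j) : StrictMono g := by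
  intro i j hij
  obtain ⟨d, hd⟩ : ∃ d, (j : ℕ) = (i : ℕ) + d + 1 := ⟨(j : ℕ) - i - 1, by omega⟩
  clear hij
  induction d generalizing j with
  | zero => exact h i j (by omega)
  | succ d ih =>
      have hm : (i : ℕ) + d + 1 < k := by omega
      have hmid := ih (j := ⟨(i : ℕ) + d + 1, hm⟩) rfl
      exact hmid.trans (h ⟨(i : ℕ) + d + 1, hm⟩ j (by simp; omega))

/-- τ contains π iff there is a valid embedding of the point set
`S_π = {(i, π i)}` into `S_τ = {(i, τ i)}`, i.e. a map preserving the relative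
position of index-neighbors (x-coordinates) and value-neighbors (y-coordinates). -/
theorem contains_iff_valid_embedding (n k : ℕ)
    (τ : Equiv.Perm (Fin n)) (π : Equiv.Perm (Fin k)) :
    (∃ g : Fin k → Fin n, StrictMono g ∧
        ∀ j l : Fin k, π j < π l ↔ τ (g j) < τ (g l)) ↔
    (∃ f : {p : Fin k × Fin k // π p.1 = p.2} → {p : Fin n × Fin n // τ p.1 = p.2},
        (∀ p q : {p : Fin k × Fin k // π p.1 = p.2},
          ((q.val.1 : ℕ) = (p.val.1 : ℕ) + 1) → (f p).val.1 < (f q).val.1) ∧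
        (∀ p q : {p : Fin k × Fin k // π p.1 = p.2},
          ((q.val.2 : ℕ) = (p.val.2 : ℕ) + 1) → (f p).val.2 < (f q).val.2)) := by
  constructor
  · rintro ⟨g, hg, hgv⟩
    refine ⟨fun p => ⟨(g p.val.1, τ (g p.val.1)), rfl⟩, ?_, ?_⟩
    · rintro ⟨⟨a, b⟩, hp⟩ ⟨⟨c, d⟩, hq⟩ hstep
      simp only at hstep
      exact hg (show a < c from Fin.lt_def.mpr (by omega))
    · rintro ⟨⟨a, b⟩, hp⟩ ⟨⟨c, d⟩, hq⟩ hstep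
      simp only at hp hq hstep ⊢
      exact (hgv a c).mp (by rw [hp, hq]; exact Fin.lt_def.mpr (by omega))
  · rintro ⟨f, hx, hy⟩
    set g : Fin k → Fin n := fun j => (f ⟨(j, π j), rfl⟩).val.1 with hgdef
    have hgsm : StrictMono g :=
      step_sm (fun i j hij => hx ⟨(i, π i), rfl⟩ ⟨(j, π j), rfl⟩ hij)
    set h : Fin k → Fin n :=
      (fun y => (f ⟨(π.symm y, y), π.apply_symm_apply y⟩).val.2) with hhdef
    have hhsm : StrictMono h :=
      step_sm (fun i j hij => hy _ _ hij)
    have key : ∀ j : Fin k, h (π j) = τ (g j) := by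
      intro j
      have heq : (⟨(π.symm (π j), π j), π.apply_symm_apply _⟩ :
          {p : Fin k × Fin k // π p.1 = p.2}) = ⟨(j, π j), rfl⟩ := by
        apply Subtype.ext
        simp [π.symm_apply_apply]
      simp only [hhdef, heq]
      exact ((f ⟨(j, π j), rfl⟩).prop).symm
    refine ⟨g, hgsm, fun j l => ?_⟩
    constructor
    · intro hjl
      rw [← key, ← key]
      exact hhsm hjl
    · intro htl
      by_contra hn
      push_neg at hn
      exact absurd (key l ▸ key j ▸ hhsm.monotone hn) (not_le.mpr htl)
end

section
/- For every even k, there exists a 2-increasing permutation of length 2k² whose incidence graph contains a k × 2k grid graph as a subgraph. Specifically, the union of the two Hamiltonian paths (x₁,y₁,y₂,x₂,x₃,y₃,y₄,x₄,…) and (x₁,…,x_k, y₁,x_{k+1},x_{k+2},y₂,y₃,x_{k+3},x_{k+4},y₄,…, y_{k²−k+1},…,y_{k²}) on tracks x₁,…,x_{k²} and y₁,…,y_{k²} contains, under the relabeling z_{i,j} = x_{⌊j/2⌋k+i} for odd j and z_{i,j} = y_{(j/2−1)k+i} for even j, edges between z_{i,j} and z_{i+1,j} and between z_{i,j} and z_{i,j+1}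 for all i ∈ [k−1], j ∈ [2k−1]. -/
/-- Vertices of the 2-track graph: `Sum.inl i` is x_i, `Sum.inr i` is y_i
(1-indexed, i ∈ [k²]). -/
abbrev TrackV := ℕ ⊕ ℕ

/-- Edges of the first Hamiltonian path x₁,y₁,y₂,x₂,x₃,y₃,y₄,x₄,… -/
def ham1Adj (k : ℕ) (a b : TrackV) : Prop :=
  ∃ q : ℕ,
    (2 * q + 1 ≤ k ^ 2 ∧ a = Sum.inl (2 * q + 1) ∧ b = Sum.inr (2 * q + 1)) ∨
    (2 * q + 2 ≤ k ^ 2 ∧ a = Sum.inr (2 * q + 1) ∧ b = Sum.inr (2 * q + 2)) ∨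
    (2 * q + 2 ≤ k ^ 2 ∧ a = Sum.inr (2 * q + 2) ∧ b = Sum.inl (2 * q + 2)) ∨
    (2 * q + 3 ≤ k ^ 2 ∧ a = Sum.inl (2 * q + 2) ∧ b = Sum.inl (2 * q + 3))

/-- Edges of the second Hamiltonian path
x₁,…,x_k, y₁,x_{k+1},x_{k+2},y₂, y₃,x_{k+3},x_{k+4},y₄, …, y_{k²−k+1},…,y_{k²}. -/
def ham2Adj (k : ℕ) (a b : TrackV) : Prop :=
  (∃ j : ℕ, 1 ≤ j ∧ j < k ∧ a = Sum.inl j ∧ b = Sum.inl (j + 1)) ∨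
  (a = Sum.inl k ∧ b = Sum.inr 1) ∨
  (∃ q : ℕ, k + 2 * q + 2 ≤ k ^ 2 ∧
    ((a = Sum.inr (2 * q + 1) ∧ b = Sum.inl (k + 2 * q + 1)) ∨
     (a = Sum.inl (k + 2 * q + 1) ∧ b = Sum.inl (k + 2 * q + 2)) ∨
     (a = Sum.inl (k + 2 * q + 2) ∧ b = Sum.inr (2 * q + 2)) ∨
     (k + 2 * q + 2 < k ^ 2 ∧ a = Sum.inr (2 * q + 2) ∧ b = Sum.inr (2 * q + 3)))) ∨
  (∃ j : ℕ, k ^ 2 - k ≤ j ∧ j < k ^ 2 ∧ a = Sum.inr j ∧ b = Sum.inr (j + 1))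

/-- The union of the two Hamiltonian paths (as a symmetric adjacency). -/
def twoTrackAdj (k : ℕ) (a b : TrackV) : Prop :=
  ham1Adj k a b ∨ ham1Adj k b a ∨ ham2Adj k a b ∨ ham2Adj k b a

/-- The relabeling z_{i,j} = x_{⌊j/2⌋k+i} for odd j and z_{i,j} = y_{(j/2−1)k+i}
for even j (1-indexed). -/
def zLabel (k i j : ℕ) : TrackV :=
  if j % 2 = 1 then Sum.inl ((j / 2) * k + i) else Sum.inr ((j / 2 - 1) * k + i)

private lemma bound1 {k t i : ℕ} (ht : t + 1 ≤ k) (hi : i ≤ k) : t * k + i ≤ k ^ 2 := by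
  calc t * k + i ≤ t * k + k := by omega
    _ = (t + 1) * k := by ring
    _ ≤ k * k := Nat.mul_le_mul_right k ht
    _ = k ^ 2 := (sq k).symm

private lemma ksq_even {k : ℕ} (hke : k % 2 = 0) : k ^ 2 % 2 = 0 := by
  rw [pow_two, Nat.mul_mod, hke]

private lemma xx_adj {k n : ℕ} (hk : 2 ≤ k) (hke : k % 2 = 0) (h1 : 1 ≤ n)
    (h2 : n + 1 ≤ k ^ 2) : twoTrackAdj k (Sum.inl n) (Sum.inl (n + 1)) := by
  rcases Nat.mod_two_eq_zero_or_one n with he | ho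
  · obtain ⟨q, rfl⟩ : ∃ q, n = 2 * q + 2 := ⟨n / 2 - 1, by omega⟩
    exact Or.inl ⟨q, Or.inr (Or.inr (Or.inr ⟨by omega, rfl, by norm_num⟩))⟩
  · rcases lt_or_ge n k with h | h
    · exact Or.inr (Or.inr (Or.inl (Or.inl ⟨n, h1, h, rfl, rfl⟩)))
    · have hn : k < n := by omega
      obtain ⟨q, rfl⟩ : ∃ q, n = k + 2 * q + 1 := ⟨(n - k - 1) / 2, by omega⟩
      refine Or.inr (Or.inr (Or.inl (Or.inr (Or.inr (Or.inl ⟨q, by omega, ?_⟩)))))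
      exact Or.inr (Or.inl ⟨rfl, by ring_nf⟩)

private lemma yy_adj {k n : ℕ} (hk : 2 ≤ k) (hke : k % 2 = 0) (h1 : 1 ≤ n)
    (h2 : n + 1 ≤ k ^ 2) : twoTrackAdj k (Sum.inr n) (Sum.inr (n + 1)) := by
  rcases Nat.mod_two_eq_zero_or_one n with he | ho
  · rcases lt_or_ge (n + k) (k ^ 2) with h | h
    · obtain ⟨q, rfl⟩ : ∃ q, n = 2 * q + 2 := ⟨n / 2 - 1, by omega⟩
      refine Or.inr (Or.inr (Or.inl (Or.inr (Or.inr (Or.inl ⟨q, by omega, ?_⟩)))))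
      exact Or.inr (Or.inr (Or.inr ⟨by omega, rfl, by norm_num⟩))
    · refine Or.inr (Or.inr (Or.inl (Or.inr (Or.inr (Or.inr ⟨n, by omega, by omega, rfl, rfl⟩)))))
  · obtain ⟨q, rfl⟩ : ∃ q, n = 2 * q + 1 := ⟨n / 2, by omega⟩
    exact Or.inl ⟨q, Or.inr (Or.inl ⟨by omega, rfl, by norm_num⟩)⟩

private lemma xy_adj {k n : ℕ} (h1 : 1 ≤ n) (h2 : n ≤ k ^ 2) :
    twoTrackAdj k (Sum.inl n) (Sum.inr n) := by
  rcases Nat.mod_two_eq_zero_or_one n with he | ho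
  · obtain ⟨q, rfl⟩ : ∃ q, n = 2 * q + 2 := ⟨n / 2 - 1, by omega⟩
    exact Or.inr (Or.inl ⟨q, Or.inr (Or.inr (Or.inl ⟨by omega, rfl, rfl⟩))⟩)
  · obtain ⟨q, rfl⟩ : ∃ q, n = 2 * q + 1 := ⟨n / 2, by omega⟩
    exact Or.inl ⟨q, Or.inl ⟨by omega, rfl, rfl⟩⟩

private lemma yx_adj {k m : ℕ} (hk : 2 ≤ k) (hke : k % 2 = 0) (h1 : 1 ≤ m)
    (h2 : m + k ≤ k ^ 2) : twoTrackAdj k (Sum.inr m) (Sum.inl (m + k)) := by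
  have hsq := ksq_even hke
  rcases Nat.mod_two_eq_zero_or_one m with he | ho
  · obtain ⟨q, rfl⟩ : ∃ q, m = 2 * q + 2 := ⟨m / 2 - 1, by omega⟩
    refine Or.inr (Or.inr (Or.inr (Or.inr (Or.inr (Or.inl ⟨q, by omega, ?_⟩)))))
    exact Or.inr (Or.inr (Or.inl ⟨by ring_nf, rfl⟩))
  · have hlt : m + k + 1 ≤ k ^ 2 := by omega
    obtain ⟨q, rfl⟩ : ∃ q, m = 2 * q + 1 := ⟨m / 2, by omega⟩
    refine Or.inr (Or.inr (Or.inl (Or.inr (Or.inr (Or.inl ⟨q, by omega, ?_⟩)))))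
    exact Or.inl ⟨rfl, by ring_nf⟩

/-- for every even k, the 2-track graph on x₁,…,x_{k²},y₁,…,y_{k²}
given by the two Hamiltonian paths above contains, under the relabeling z, all
edges of the k × 2k grid: z_{i,j} ∼ z_{i+1,j} and z_{i,j} ∼ z_{i,j+1}. -/
theorem two_track_contains_grid (k : ℕ) (hk : 2 ≤ k) (hkeven : k % 2 = 0) :
    ∀ i j : ℕ, 1 ≤ i → i ≤ k → 1 ≤ j → j ≤ 2 * k →
      (i < k → twoTrackAdj k (zLabel k i j) (zLabel k (i + 1) j)) ∧
      (j < 2 * k → twoTrackAdj k (zLabel k i j) (zLabel k i (j + 1))) := by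
  intro i j hi hik hj hjk
  constructor
  · intro hlt
    rcases Nat.mod_two_eq_zero_or_one j with he | ho
    · obtain ⟨t, rfl⟩ : ∃ t, j = 2 * t + 2 := ⟨j / 2 - 1, by omega⟩
      have ht : t + 1 ≤ k := by omega
      have hm : ¬ ((2 * t + 2) % 2 = 1) := by omega
      have hd : (2 * t + 2) / 2 - 1 = t := by omega
      simp only [zLabel, hm, if_false, hd]
      exact yy_adj hk hkeven (hi.trans (Nat.le_add_left i _))
        (by have := bound1 (t := t) (i := i + 1) ht (by omega); omega)
    · obtain ⟨t, rfl⟩ : ∃ t, j = 2 * t + 1 := ⟨j / 2, by omega⟩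
      have ht : t + 1 ≤ k := by omega
      have hm : (2 * t + 1) % 2 = 1 := by omega
      have hd : (2 * t + 1) / 2 = t := by omega
      simp only [zLabel, hm, if_true, hd]
      exact xx_adj hk hkeven (hi.trans (Nat.le_add_left i _))
        (by have := bound1 (t := t) (i := i + 1) ht (by omega); omega)
  · intro hlt
    rcases Nat.mod_two_eq_zero_or_one j with he | ho
    · obtain ⟨t, rfl⟩ : ∃ t, j = 2 * t + 2 := ⟨j / 2 - 1, by omega⟩
      have ht : t + 2 ≤ k := by omega
      have hm : ¬ ((2 * t + 2) % 2 = 1) := by omega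
      have hm' : (2 * t + 2 + 1) % 2 = 1 := by omega
      have hd : (2 * t + 2) / 2 - 1 = t := by omega
      have hd' : (2 * t + 2 + 1) / 2 = t + 1 := by omega
      simp only [zLabel, hm, if_false, hm', if_true, hd, hd']
      have heq : (t + 1) * k + i = (t * k + i) + k := by ring
      rw [heq]
      refine yx_adj hk hkeven (hi.trans (Nat.le_add_left i _)) ?_
      have := bound1 (t := t + 1) (i := i) ht hik
      omega
    · obtain ⟨t, rfl⟩ : ∃ t, j = 2 * t + 1 := ⟨j / 2, by omega⟩
      have ht : t + 1 ≤ k := by omega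
      have hm : (2 * t + 1) % 2 = 1 := by omega
      have hm' : ¬ ((2 * t + 1 + 1) % 2 = 1) := by omega
      have hd : (2 * t + 1) / 2 = t := by omega
      have hd' : (2 * t + 1 + 1) / 2 - 1 = t := by omega
      simp only [zLabel, hm, if_true, hm', if_false, hd, hd']
      exact xy_adj (hi.trans (Nat.le_add_left i _)) (bound1 ht hik)
end

section
/- Every permutation of length n can be obtained from the identity permutation id_n by at most ⌈log₂ n⌉ split operations, where a split moves a subsequence of the current permutation to the front. -/
private def rk {n : ℕ} (S : Finset (Fin n)) (v : Fin n) : ℕ :=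
  (S.filter (fun u => u < v)).card

private lemma rk_lt_card {n : ℕ} {S : Finset (Fin n)} {v : Fin n} (hv : v ∈ S) :
    rk S v < S.card := by
  apply Finset.card_lt_card
  rw [Finset.ssubset_def]
  refine ⟨Finset.filter_subset _ _, fun hsub => ?_⟩
  have := hsub hv
  simp at this

private lemma rk_mono {n : ℕ} {S : Finset (Fin n)} {u v : Fin n} (h : u ≤ v) :
    rk S u ≤ rk S v := by
  apply Finset.card_le_card
  intro x hx
  simp only [Finset.mem_filter] at hx ⊢
  exact ⟨hx.1, lt_of_lt_of_le hx.2 h⟩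

private lemma rk_strict {n : ℕ} {S : Finset (Fin n)} {u v : Fin n} (hu : u ∈ S) (h : u < v) :
    rk S u < rk S v := by
  apply Finset.card_lt_card
  rw [Finset.ssubset_def]
  constructor
  · intro x hx
    simp only [Finset.mem_filter] at hx ⊢
    exact ⟨hx.1, lt_trans hx.2 h⟩
  · intro hsub
    have : u ∈ S.filter (fun x => x < v) := Finset.mem_filter.mpr ⟨hu, h⟩
    have := hsub this
    simp at this

private lemma lt_of_rk_lt {n : ℕ} {S : Finset (Fin n)} {u v : Fin n}
    (h : rk S u < rk S v) : u < v := by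
  by_contra hc
  push_neg at hc
  exact absurd (rk_mono (S := S) hc) (by omega)

private lemma strictMono_le {n : ℕ} {f : Fin n → Fin n} (hf : StrictMono f) :
    ∀ i : Fin n, (i : ℕ) ≤ f i := by
  intro i
  obtain ⟨i, hi⟩ := i
  induction i with
  | zero => simp
  | succ m ih =>
      have hm : m < n := Nat.lt_of_succ_lt hi
      have h1 : f ⟨m, hm⟩ < f ⟨m + 1, hi⟩ := hf (by simp [Fin.lt_def])
      have h2 := ih hm
      have h3 := Fin.lt_def.mp h1
      simp only at h2 h3 ⊢
      omega

private lemma perm_eq_one_of_strictMono {n : ℕ} {π : Equiv.Perm (Fin n)}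
    (hf : StrictMono ⇑π) : π = 1 := by
  have hs : StrictMono ⇑π.symm := fun a b h => by
    rw [← hf.lt_iff_lt]
    simpa using h
  ext i
  have h1 := strictMono_le hf i
  have h2 := strictMono_le hs (π i)
  simp only [Equiv.symm_apply_apply] at h2
  simp only [Equiv.Perm.one_apply]
  omega

private lemma key (k : ℕ) : ∀ (n : ℕ) (π : Equiv.Perm (Fin n)) (f : Fin n → ℕ),
    Monotone f → (∀ i, f i < 2 ^ k) → (∀ i j, i < j → f i = f j → π i < π j) →
    ∃ L : List (Equiv.Perm (Fin n)), L.length ≤ k ∧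
      (∀ σ ∈ L, ∃ p : ℕ,
        (∀ i j : Fin n, i < j → (j : ℕ) < p → σ i < σ j) ∧
        (∀ i j : Fin n, i < j → p ≤ (i : ℕ) → σ i < σ j)) ∧
      π = L.prod := by
  induction k with
  | zero =>
      intro n π f hm hb hf
      have hsm : StrictMono ⇑π := by
        intro i j hij
        have h1 := hb i
        have h2 := hb j
        exact hf i j hij (by omega)
      refine ⟨[], by simp, by simp, ?_⟩
      simp [perm_eq_one_of_strictMono hsm]
  | succ k ih =>
      intro n π f hm hb hf
      set A : Finset (Fin n) := Finset.univ.filter (fun v => f (π.symm v) % 2 = 0) with hA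
      have hmemA : ∀ x : Fin n, π x ∈ A ↔ f x % 2 = 0 := by
        intro x; simp [hA]
      set g : Fin n → ℕ := fun x =>
        if π x ∈ A then rk A (π x) else A.card + rk Aᶜ (π x) with hg
      have hgA : ∀ x, π x ∈ A → g x = rk A (π x) := fun x hx => by simp [hg, hx]
      have hgA' : ∀ x, π x ∉ A → g x = A.card + rk Aᶜ (π x) := fun x hx => by simp [hg, hx]
      have hcards : A.card + Aᶜ.card = n := by
        rw [Finset.card_add_card_compl]; simp
      have hgn : ∀ x, g x < n := by
        intro x
        by_cases hx : π x ∈ A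
        · rw [hgA x hx]
          have h1 := rk_lt_card hx
          have h2 : A.card ≤ n := by
            have := Finset.card_le_univ A; simpa using this
          omega
        · rw [hgA' x hx]
          have h1 := rk_lt_card (Finset.mem_compl.mpr hx)
          omega
      let F : Fin n → Fin n := fun x => ⟨g x, hgn x⟩
      have hFinj : Function.Injective F := by
        intro x y hxy
        have hgxy : g x = g y := congrArg Fin.val hxy
        have heq : π x = π y := by
          by_cases hx : π x ∈ A <;> by_cases hy : π y ∈ A
          · rw [hgA x hx, hgA y hy] at hgxy
            rcases lt_trichotomy (π x) (π y) with h | h | h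
            · exact absurd (rk_strict hx h) (by omega)
            · exact h
            · exact absurd (rk_strict hy h) (by omega)
          · rw [hgA x hx, hgA' y hy] at hgxy
            exact absurd (rk_lt_card hx) (by omega)
          · rw [hgA' x hx, hgA y hy] at hgxy
            exact absurd (rk_lt_card hy) (by omega)
          · rw [hgA' x hx, hgA' y hy] at hgxy
            have hx' := Finset.mem_compl.mpr hx
            have hy' := Finset.mem_compl.mpr hy
            rcases lt_trichotomy (π x) (π y) with h | h | h
            · exact absurd (rk_strict hx' h) (by omega)
            · exact h
            · exact absurd (rk_strict hy' h) (by omega)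
        exact π.injective heq
      let τ : Equiv.Perm (Fin n) := Equiv.ofBijective F (Finite.injective_iff_bijective.mp hFinj)
      have hτ : ∀ x, (τ x : ℕ) = g x := fun x => rfl
      have hfτ : ∀ i j, i < j → f i / 2 = f j / 2 → τ i < τ j := by
        intro i j hij hdiv
        have hle : f i ≤ f j := hm (le_of_lt hij)
        rw [Fin.lt_def, hτ, hτ]
        by_cases heq : f i = f j
        · have hππ : π i < π j := hf i j hij heq
          by_cases he : f i % 2 = 0
          · have hi' : π i ∈ A := (hmemA i).mpr he
            have hj' : π j ∈ A := (hmemA j).mpr (heq ▸ he)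
            rw [hgA i hi', hgA j hj']
            exact rk_strict hi' hππ
          · have hi' : π i ∉ A := fun h => he ((hmemA i).mp h)
            have hj' : π j ∉ A := fun h => he (heq ▸ (hmemA j).mp h)
            rw [hgA' i hi', hgA' j hj']
            have := rk_strict (Finset.mem_compl.mpr hi') hππ
            omega
        · have hpar : f i % 2 = 0 ∧ f j % 2 = 1 := by omega
          have hi' : π i ∈ A := (hmemA i).mpr hpar.1
          have hj' : π j ∉ A := fun h => by
            have := (hmemA j).mp h; omega
          rw [hgA i hi', hgA' j hj']
          have := rk_lt_card hi'
          omega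
      obtain ⟨L', hlen, hsp, hprod⟩ := ih n τ (fun i => f i / 2)
        (fun a b h => Nat.div_le_div_right (hm h))
        (fun i => by
          show f i / 2 < 2 ^ k
          have := hb i
          have h2 : 2 ^ (k + 1) = 2 * 2 ^ k := by rw [pow_succ]; ring
          omega)
        hfτ
      refine ⟨(π * τ⁻¹) :: L', by simpa using hlen, ?_, ?_⟩
      · intro σ hσ
        rcases List.mem_cons.mp hσ with h | h
        · subst h
          have hgsym : ∀ i : Fin n, g (τ.symm i) = (i : ℕ) := by
            intro i
            have h := hτ (τ.symm i)
            rw [Equiv.apply_symm_apply] at h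
            exact h.symm
          refine ⟨A.card, ?_, ?_⟩
          · intro i j hij hjp
            have hij' : (i : ℕ) < (j : ℕ) := Fin.lt_def.mp hij
            have hgi := hgsym i
            have hgj := hgsym j
            have hxi : π (τ.symm i) ∈ A := by
              by_contra hc
              have := hgA' _ hc
              omega
            have hxj : π (τ.symm j) ∈ A := by
              by_contra hc
              have := hgA' _ hc
              omega
            have hri := hgA _ hxi
            have hrj := hgA _ hxj
            have hlt : π (τ.symm i) < π (τ.symm j) := lt_of_rk_lt (S := A) (by omega)
            simpa only [Equiv.Perm.mul_apply, Equiv.Perm.inv_def] using hlt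
          · intro i j hij hpi
            have hij' : (i : ℕ) < (j : ℕ) := Fin.lt_def.mp hij
            have hgi := hgsym i
            have hgj := hgsym j
            have hxi : π (τ.symm i) ∉ A := by
              intro hc
              have h1 := hgA _ hc
              have h2 := rk_lt_card hc
              omega
            have hxj : π (τ.symm j) ∉ A := by
              intro hc
              have h1 := hgA _ hc
              have h2 := rk_lt_card hc
              omega
            have hri := hgA' _ hxi
            have hrj := hgA' _ hxj
            have hlt : π (τ.symm i) < π (τ.symm j) := lt_of_rk_lt (S := Aᶜ) (by omega)
            simpa only [Equiv.Perm.mul_apply, Equiv.Perm.inv_def] using hlt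
        · exact hsp σ h
      · rw [List.prod_cons, ← hprod, mul_assoc, inv_mul_cancel, mul_one]

/-- every permutation of length n is a product of at most ⌈log₂ n⌉
split permutations (a split permutation consists of two increasing runs:
positions before p and positions from p on are each increasing). -/
theorem perm_prod_of_splits (n : ℕ) (π : Equiv.Perm (Fin n)) :
    ∃ L : List (Equiv.Perm (Fin n)), L.length ≤ Nat.clog 2 n ∧
      (∀ σ ∈ L, ∃ p : ℕ,
        (∀ i j : Fin n, i < j → (j : ℕ) < p → σ i < σ j) ∧
        (∀ i j : Fin n, i < j → p ≤ (i : ℕ) → σ i < σ j)) ∧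
      π = L.prod := by
  apply key (Nat.clog 2 n) n π (fun i => (i : ℕ))
  · exact fun a b h => h
  · exact fun i => lt_of_lt_of_le i.isLt (Nat.le_pow_clog one_lt_two n)
  · intro i j h he
    exact absurd (Fin.ext he) (ne_of_lt h)
end

section
/- In the even-odd algorithm, if g_i is a restriction of some valid embedding f to Q^E ∪ P_i, and q ∈ S_τ is the point of minimum y-coordinate satisfying the box constraints g_i(N^L(p_{i+1})).x < q.x < g_i(N^R(p_{i+1})).x, g_i(N^D(p_{i+1})).y < q.y, and (when N^U(p_{i+1}) ∈ Q^E) q.y < g_i(N^U(p_{i+1})).y, then the extension g_{i+1} of g_i mapping p_{i+1} ↦ q is also a restriction of some valid embedding to Q^E ∪ P_{i+1}. -/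
/-- A valid embedding of the pattern π into the text τ, described on indices:
index-consecutive points go to points in the same horizontal order, and
value-consecutive points go to points in the same vertical order. -/
def IsValidEmb {n k : ℕ} (τ : Equiv.Perm (Fin n)) (π : Equiv.Perm (Fin k))
    (g : Fin k → Fin n) : Prop :=
  (∀ j j' : Fin k, (j' : ℕ) = (j : ℕ) + 1 → g j < g j') ∧
  (∀ j j' : Fin k, (π j' : ℕ) = (π j : ℕ) + 1 → τ (g j) < τ (g j'))

/-- key step of the even-odd algorithm: suppose f is a valid
embedding, p is an odd-index point of π (0-indexed: (p:ℕ) even), and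
q is the point of the text of minimum value satisfying the box constraints
determined by the already-embedded neighbors of p (its index-neighbors, its
value-predecessor, and — when it has even 1-indexed index — its value-successor).
Then there is a valid embedding f' agreeing with f on Q^E ∪ P_i (the even-index
points and the odd-index points of smaller value than p) and sending p to q. -/
theorem even_odd_step (n k : ℕ)
    (τ : Equiv.Perm (Fin n)) (π : Equiv.Perm (Fin k))
    (f : Fin k → Fin n) (hf : IsValidEmb τ π f)
    (p : Fin k) (hp : (p : ℕ) % 2 = 0)
    (q : Fin n)
    (hqL : ∀ j : Fin k, (p : ℕ) = (j : ℕ) + 1 → f j < q)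
    (hqR : ∀ j : Fin k, (j : ℕ) = (p : ℕ) + 1 → q < f j)
    (hqD : ∀ j : Fin k, (π p : ℕ) = (π j : ℕ) + 1 → τ (f j) < τ q)
    (hqU : ∀ j : Fin k, (π j : ℕ) = (π p : ℕ) + 1 → (j : ℕ) % 2 = 1 → τ q < τ (f j))
    (hqmin : ∀ q' : Fin n,
      (∀ j : Fin k, (p : ℕ) = (j : ℕ) + 1 → f j < q') →
      (∀ j : Fin k, (j : ℕ) = (p : ℕ) + 1 → q' < f j) →
      (∀ j : Fin k, (π p : ℕ) = (π j : ℕ) + 1 → τ (f j) < τ q') →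
      (∀ j : Fin k, (π j : ℕ) = (π p : ℕ) + 1 → (j : ℕ) % 2 = 1 → τ q' < τ (f j)) →
      τ q ≤ τ q') :
    ∃ f' : Fin k → Fin n, IsValidEmb τ π f' ∧
      (∀ j : Fin k, ((j : ℕ) % 2 = 1 ∨ ((j : ℕ) % 2 = 0 ∧ π j < π p)) → f' j = f j) ∧
      f' p = q := by
  classical
  have hmin : τ q ≤ τ (f p) :=
    hqmin (f p) (fun j hj => hf.1 j p hj) (fun j hj => hf.1 p j hj)
      (fun j hj => hf.2 j p hj) (fun j hj _ => hf.2 p j hj)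
  refine ⟨Function.update f p q, ⟨?_, ?_⟩, ?_, by simp⟩
  · intro j j' h
    rcases eq_or_ne j p with rfl | hj
    · have hj' : j' ≠ j := by rintro rfl; omega
      rw [Function.update_self, Function.update_of_ne hj']
      exact hqR j' h
    · rw [Function.update_of_ne hj]
      rcases eq_or_ne j' p with rfl | hj'
      · rw [Function.update_self]; exact hqL j h
      · rw [Function.update_of_ne hj']; exact hf.1 j j' h
  · intro j j' h
    rcases eq_or_ne j p with rfl | hj
    · have hj' : j' ≠ j := by rintro rfl; omega
      rw [Function.update_self, Function.update_of_ne hj']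
      rcases Nat.mod_two_eq_zero_or_one (j' : ℕ) with h0 | h1
      · exact lt_of_le_of_lt hmin (hf.2 j j' h)
      · exact hqU j' h h1
    · rw [Function.update_of_ne hj]
      rcases eq_or_ne j' p with rfl | hj'
      · rw [Function.update_self]; exact hqD j h
      · rw [Function.update_of_ne hj']; exact hf.2 j j' h
  · intro j hj
    have hne : j ≠ p := by
      rcases hj with h1 | ⟨h0, hlt⟩
      · rintro rfl; omega
      · rintro rfl; exact lt_irrefl _ hlt
    exact Function.update_of_ne hne q f
end

section
/- If a graph G is the union of two Hamiltonian paths on the same vertex set such that each vertex set can be partitioned into two sequences (tracks) visited in order by both paths, then G is planar. -/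
/-- A graph is planar if it has a drawing in the plane: an injective placement of
the vertices and, for each edge, a simple continuous arc between its endpoints,
such that arcs avoid other vertices and two arcs of distinct edges meet only at
common endpoints. -/
def IsPlanar {V : Type*} (G : SimpleGraph V) : Prop :=
  ∃ (pos : V → ℝ × ℝ) (arc : V → V → ℝ → ℝ × ℝ),
    Function.Injective pos ∧
    (∀ u v, G.Adj u v →
      Continuous (arc u v) ∧ arc u v 0 = pos u ∧ arc u v 1 = pos v ∧
      Set.InjOn (arc u v) (Set.Icc 0 1)) ∧
    (∀ u v w, G.Adj u v → w ≠ u → w ≠ v → pos w ∉ arc u v '' Set.Icc 0 1) ∧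
    (∀ u v u' v', G.Adj u v → G.Adj u' v' → ({u, v} : Set V) ≠ {u', v'} →
      ∀ s ∈ Set.Icc (0 : ℝ) 1, ∀ t ∈ Set.Icc (0 : ℝ) 1,
        arc u v s = arc u' v' t →
          ∃ w, (w = u ∨ w = v) ∧ (w = u' ∨ w = v') ∧ arc u v s = pos w)

noncomputable def semiArc (p q s t : ℝ) : ℝ × ℝ :=
  ((p + q) / 2 - ((q - p) / 2) * Real.cos (Real.pi * t),
   s * (|q - p| / 2) * Real.sin (Real.pi * t))

lemma semiArc_zero (p q s : ℝ) : semiArc p q s 0 = (p, 0) := by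
  simp [semiArc]; ring

lemma semiArc_one (p q s : ℝ) : semiArc p q s 1 = (q, 0) := by
  simp [semiArc]; ring

lemma semiArc_cont (p q s : ℝ) : Continuous (semiArc p q s) := by
  unfold semiArc
  fun_prop

lemma semiArc_injOn (p q s : ℝ) (hpq : p ≠ q) :
    Set.InjOn (semiArc p q s) (Set.Icc 0 1) := by
  intro t1 ht1 t2 ht2 h
  have h1 : (semiArc p q s t1).1 = (semiArc p q s t2).1 := by rw [h]
  simp only [semiArc] at h1
  have hc : Real.cos (Real.pi * t1) = Real.cos (Real.pi * t2) := by
    have hq : (q - p) / 2 ≠ 0 := by intro h0; apply hpq; linarith [h0]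
    field_simp at h1
    have h2 : (q - p) / 2 * (Real.cos (Real.pi * t1) - Real.cos (Real.pi * t2)) = 0 := by
      linarith
    rcases mul_eq_zero.mp h2 with h2 | h2
    · exact absurd h2 hq
    · linarith
  have hπ := Real.pi_pos
  have e := Real.injOn_cos
    ⟨by nlinarith [ht1.1], by nlinarith [ht1.2]⟩
    ⟨by nlinarith [ht2.1], by nlinarith [ht2.2]⟩ hc
  exact mul_left_cancel₀ (ne_of_gt hπ) e

lemma semiArc_eq (p q s t : ℝ) (hs : s = 1 ∨ s = -1) :
    ((semiArc p q s t).1 - min p q) * (max p q - (semiArc p q s t).1)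
      = (semiArc p q s t).2 ^ 2 := by
  have hsin := Real.sin_sq_add_cos_sq (Real.pi * t)
  have hs2 : s ^ 2 = 1 := by rcases hs with h | h <;> simp [h]
  rcases le_total p q with h | h
  · rw [min_eq_left h, max_eq_right h]
    have : |q - p| = q - p := abs_of_nonneg (by linarith)
    simp only [semiArc, this]
    linear_combination (-(((q - p) / 2) ^ 2)) * hsin
      + (-(((q - p) / 2) ^ 2 * Real.sin (Real.pi * t) ^ 2)) * hs2
  · rw [min_eq_right h, max_eq_left h]
    have : |q - p| = -(q - p) := abs_of_nonpos (by linarith)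
    simp only [semiArc, this]
    linear_combination (-(((q - p) / 2) ^ 2)) * hsin
      + (-(((q - p) / 2) ^ 2 * Real.sin (Real.pi * t) ^ 2)) * hs2

lemma semiArc_sign_pos (p q t : ℝ) (ht : t ∈ Set.Icc (0:ℝ) 1) :
    0 ≤ (semiArc p q 1 t).2 := by
  have : 0 ≤ Real.sin (Real.pi * t) := by
    apply Real.sin_nonneg_of_nonneg_of_le_pi
    · nlinarith [ht.1, Real.pi_pos]
    · nlinarith [ht.2, Real.pi_pos]
  simp only [semiArc]
  positivity

lemma semiArc_sign_neg (p q t : ℝ) (ht : t ∈ Set.Icc (0:ℝ) 1) :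
    (semiArc p q (-1) t).2 ≤ 0 := by
  have : 0 ≤ Real.sin (Real.pi * t) := by
    apply Real.sin_nonneg_of_nonneg_of_le_pi
    · nlinarith [ht.1, Real.pi_pos]
    · nlinarith [ht.2, Real.pi_pos]
  simp only [semiArc]
  nlinarith [abs_nonneg (q - p)]

lemma circle_key (a b c d X Y : ℝ) (hab : a < b) (hcd : c < d)
    (e1 : (X - a) * (b - X) = Y ^ 2) (e2 : (X - c) * (d - X) = Y ^ 2)
    (hsep : b ≤ c ∨ d ≤ a ∨ (a ≤ c ∧ d ≤ b ∧ ¬(a = c ∧ b = d))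
      ∨ (c ≤ a ∧ b ≤ d ∧ ¬(a = c ∧ b = d))) :
    Y = 0 ∧ (X = a ∨ X = b) ∧ (X = c ∨ X = d) := by
  have hY : 0 ≤ Y ^ 2 := sq_nonneg Y
  have hXa : a ≤ X := by nlinarith
  have hXb : X ≤ b := by nlinarith
  have hXc : c ≤ X := by nlinarith
  have hXd : X ≤ d := by nlinarith
  have nested : ∀ a b c d X : ℝ, a < b → c < d → a ≤ X → X ≤ b → c ≤ X → X ≤ d →
      (X - a) * (b - X) = Y ^ 2 → (X - c) * (d - X) = Y ^ 2 →
      a ≤ c → d ≤ b → ¬(a = c ∧ b = d) →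
      Y = 0 ∧ (X = a ∨ X = b) ∧ (X = c ∨ X = d) := by
    intro a b c d X hab hcd hXa hXb hXc hXd e1 e2 hac hdb hne
    have hsum : (c - a) * (b - X) + (X - c) * (b - d) = 0 := by nlinarith [e1, e2]
    have h1 : 0 ≤ (c - a) * (b - X) := mul_nonneg (by linarith) (by linarith)
    have h2 : 0 ≤ (X - c) * (b - d) := mul_nonneg (by linarith) (by linarith)
    have hz1 : (c - a) * (b - X) = 0 := by linarith
    have hz2 : (X - c) * (b - d) = 0 := by linarith
    rcases eq_or_lt_of_le hac with heq | hlt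
    · have hbd : b ≠ d := fun h => hne ⟨heq, h⟩
      have hdb' : d < b := lt_of_le_of_ne hdb (Ne.symm hbd)
      have hXc' : X = c := by
        rcases mul_eq_zero.mp hz2 with h | h
        · linarith
        · linarith
      have hY0 : Y ^ 2 = 0 := by nlinarith [e2]
      exact ⟨pow_eq_zero_iff (n := 2) (by norm_num) |>.mp hY0,
        Or.inl (by linarith [heq, hXc']), Or.inl hXc'⟩
    · have hXb' : X = b := by
        rcases mul_eq_zero.mp hz1 with h | h
        · linarith
        · linarith
      have hXd' : X = d := by linarith
      have hY0 : Y ^ 2 = 0 := by nlinarith [e2]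
      exact ⟨pow_eq_zero_iff (n := 2) (by norm_num) |>.mp hY0,
        Or.inr hXb', Or.inr hXd'⟩
  rcases hsep with h | h | ⟨h1, h2, h3⟩ | ⟨h1, h2, h3⟩
  · have hXb' : X = b := le_antisymm hXb (by linarith)
    have hXc' : X = c := le_antisymm (by linarith) hXc
    have hY0 : Y ^ 2 = 0 := by nlinarith [e1]
    exact ⟨pow_eq_zero_iff (n := 2) (by norm_num) |>.mp hY0, Or.inr hXb', Or.inl hXc'⟩
  · have hXa' : X = a := le_antisymm (by linarith) hXa
    have hXd' : X = d := le_antisymm hXd (by linarith)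
    have hY0 : Y ^ 2 = 0 := by nlinarith [e1]
    exact ⟨pow_eq_zero_iff (n := 2) (by norm_num) |>.mp hY0, Or.inl hXa', Or.inr hXd'⟩
  · exact nested a b c d X hab hcd hXa hXb hXc hXd e1 e2 h1 h2 h3
  · obtain ⟨hY0, hcd', hab'⟩ := nested c d a b X hcd hab hXc hXd hXa hXb e2 e1 h1 h2
      (fun h => h3 ⟨h.1.symm, h.2.symm⟩)
    exact ⟨hY0, hab', hcd'⟩

section helpers

lemma pairlem (p q r s : ℝ) (hmin : min p q = min r s) (hmax : max p q = max r s) :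
    (p = r ∧ q = s) ∨ (p = s ∧ q = r) := by
  rcases le_total p q with h | h <;> rcases le_total r s with h' | h'
  · rw [min_eq_left h, min_eq_left h'] at hmin
    rw [max_eq_right h, max_eq_right h'] at hmax
    exact Or.inl ⟨hmin, hmax⟩
  · rw [min_eq_left h, min_eq_right h'] at hmin
    rw [max_eq_right h, max_eq_left h'] at hmax
    exact Or.inr ⟨hmin, hmax⟩
  · rw [min_eq_right h, min_eq_left h'] at hmin
    rw [max_eq_left h, max_eq_right h'] at hmax
    exact Or.inr ⟨hmax, hmin⟩
  · rw [min_eq_right h, min_eq_right h'] at hmin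
    rw [max_eq_left h, max_eq_left h'] at hmax
    exact Or.inl ⟨hmax, hmin⟩

lemma memlem (p q X : ℝ) (hX : X = min p q ∨ X = max p q) : X = p ∨ X = q := by
  rcases le_total p q with h | h
  · rw [min_eq_left h, max_eq_right h] at hX; exact hX
  · rw [min_eq_right h, max_eq_left h] at hX; exact hX.symm

end helpers

def pathEdge {N : ℕ} {V : Type*} (h : Fin N ≃ V) (u v : V) : Prop :=
  ∃ a b : Fin N, (b : ℕ) = (a : ℕ) + 1 ∧ ((h a = u ∧ h b = v) ∨ (h a = v ∧ h b = u))

/-- a 2-track graph — the union of two Hamiltonian paths h₁, h₂ on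
the same vertex set, where the vertices split into two tracks (given by the
coloring c) such that both paths visit each track in the same order — is planar. -/
theorem two_track_graph_planar (N : ℕ) (V : Type*) (h1 h2 : Fin N ≃ V)
    (c : V → Bool)
    (htrack : ∀ u v : V, c u = c v → (h1.symm u < h1.symm v ↔ h2.symm u < h2.symm v)) :
    IsPlanar (SimpleGraph.fromRel (fun u v =>
      (∃ a b : Fin N, (b : ℕ) = (a : ℕ) + 1 ∧ h1 a = u ∧ h1 b = v) ∨
      (∃ a b : Fin N, (b : ℕ) = (a : ℕ) + 1 ∧ h2 a = u ∧ h2 b = v))) := by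
  classical
  set x : V → ℝ := fun v => (if c v then 1 else -1) * ((h1.symm v : ℕ) + 1) with hxdef
  have hxval_t : ∀ v, c v = true → x v = ((h1.symm v : ℕ) : ℝ) + 1 := by
    intro v hv; simp [hxdef, hv]
  have hxval_f : ∀ v, c v = false → x v = -(((h1.symm v : ℕ) : ℝ) + 1) := by
    intro v hv; simp [hxdef, hv]
  have hxpos : ∀ v, c v = true → 0 < x v := by
    intro v hv; rw [hxval_t v hv]; positivity
  have hxneg : ∀ v, c v = false → x v < 0 := by
    intro v hv; rw [hxval_f v hv]
    have : (0:ℝ) ≤ ((h1.symm v : ℕ) : ℝ) := Nat.cast_nonneg _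
    linarith
  have hxinj : Function.Injective x := by
    intro u v huv
    have key : ((h1.symm u : ℕ) : ℝ) = ((h1.symm v : ℕ) : ℝ) → u = v := by
      intro h
      have h' : (h1.symm u : ℕ) = (h1.symm v : ℕ) := by exact_mod_cast h
      exact h1.symm.injective (Fin.ext h')
    have n1 : (0:ℝ) ≤ ((h1.symm u : ℕ) : ℝ) := Nat.cast_nonneg _
    have n2 : (0:ℝ) ≤ ((h1.symm v : ℕ) : ℝ) := Nat.cast_nonneg _
    cases hcu : c u <;> cases hcv : c v
    · rw [hxval_f u hcu, hxval_f v hcv] at huv; exact key (by linarith)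
    · rw [hxval_f u hcu, hxval_t v hcv] at huv; exfalso; linarith
    · rw [hxval_t u hcu, hxval_f v hcv] at huv; exfalso; linarith
    · rw [hxval_t u hcu, hxval_t v hcv] at huv; exact key (by linarith)
  have hxmono_pos : ∀ u v, c u = true → c v = true → (h1.symm u : ℕ) ≤ (h1.symm v : ℕ) →
      x u ≤ x v := by
    intro u v hu hv hr
    rw [hxval_t u hu, hxval_t v hv]
    have : ((h1.symm u : ℕ) : ℝ) ≤ ((h1.symm v : ℕ) : ℝ) := by exact_mod_cast hr
    linarith
  have hxmono_neg : ∀ u v, c u = false → c v = false → (h1.symm u : ℕ) ≤ (h1.symm v : ℕ) →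
      x v ≤ x u := by
    intro u v hu hv hr
    rw [hxval_f u hu, hxval_f v hv]
    have : ((h1.symm u : ℕ) : ℝ) ≤ ((h1.symm v : ℕ) : ℝ) := by exact_mod_cast hr
    linarith
  have hm1 : ∀ a b : Fin N, (a : ℕ) < (b : ℕ) → c (h1 a) = c (h1 b) →
      (h1.symm (h1 a) : ℕ) < (h1.symm (h1 b) : ℕ) := by
    intro a b hab _
    rw [Equiv.symm_apply_apply, Equiv.symm_apply_apply]
    exact hab
  have hm2 : ∀ a b : Fin N, (a : ℕ) < (b : ℕ) → c (h2 a) = c (h2 b) →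
      (h1.symm (h2 a) : ℕ) < (h1.symm (h2 b) : ℕ) := by
    intro a b hab hc
    have h := (htrack (h2 a) (h2 b) hc).mpr (by
      rw [Equiv.symm_apply_apply, Equiv.symm_apply_apply]
      exact Fin.lt_def.mpr hab)
    exact Fin.lt_def.mp h
  have lemA : ∀ (h : Fin N ≃ V),
      (∀ a b : Fin N, (a : ℕ) < (b : ℕ) → c (h a) = c (h b) →
        (h1.symm (h a) : ℕ) < (h1.symm (h b) : ℕ)) →
      ∀ a a1 t : Fin N, (a1 : ℕ) = (a : ℕ) + 1 → (a : ℕ) < (t : ℕ) →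
      (x (h t) ≤ x (h a) ∧ x (h t) ≤ x (h a1)) ∨
      (x (h a) ≤ x (h t) ∧ x (h a1) ≤ x (h t)) := by
    intro h hm a a1 t ha1 hat
    have hstep : ∀ u : Fin N, (u : ℕ) ≤ (t : ℕ) →
        (c (h t) = true → x (h u) ≤ x (h t)) ∧ (c (h t) = false → x (h t) ≤ x (h u)) := by
      intro u hut
      rcases eq_or_lt_of_le hut with he | hl
      · have : u = t := Fin.ext he
        subst this
        exact ⟨fun _ => le_refl _, fun _ => le_refl _⟩
      constructor
      · intro hct
        cases hcu : c (h u)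
        · have := hxneg _ hcu; have := hxpos _ hct; linarith
        · exact hxmono_pos _ _ hcu hct (le_of_lt (hm u t hl (hcu.trans hct.symm)))
      · intro hct
        cases hcu : c (h u)
        · exact hxmono_neg _ _ hcu hct (le_of_lt (hm u t hl (hcu.trans hct.symm)))
        · have := hxpos _ hcu; have := hxneg _ hct; linarith
    have ha1t : (a1 : ℕ) ≤ (t : ℕ) := by omega
    cases hct : c (h t)
    · exact Or.inl ⟨(hstep a (le_of_lt hat)).2 hct, (hstep a1 ha1t).2 hct⟩
    · exact Or.inr ⟨(hstep a (le_of_lt hat)).1 hct, (hstep a1 ha1t).1 hct⟩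
  have hsepL : ∀ (h : Fin N ≃ V),
      (∀ a b : Fin N, (a : ℕ) < (b : ℕ) → c (h a) = c (h b) →
        (h1.symm (h a) : ℕ) < (h1.symm (h b) : ℕ)) →
      ∀ a a1 b b1 : Fin N, (a1 : ℕ) = (a : ℕ) + 1 → (b1 : ℕ) = (b : ℕ) + 1 →
      (a : ℕ) < (b : ℕ) →
      ¬(min (x (h a)) (x (h a1)) = min (x (h b)) (x (h b1)) ∧
        max (x (h a)) (x (h a1)) = max (x (h b)) (x (h b1))) →
      max (x (h a)) (x (h a1)) ≤ min (x (h b)) (x (h b1)) ∨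
      max (x (h b)) (x (h b1)) ≤ min (x (h a)) (x (h a1)) ∨
      (min (x (h a)) (x (h a1)) ≤ min (x (h b)) (x (h b1)) ∧
        max (x (h b)) (x (h b1)) ≤ max (x (h a)) (x (h a1)) ∧
        ¬(min (x (h a)) (x (h a1)) = min (x (h b)) (x (h b1)) ∧
          max (x (h a)) (x (h a1)) = max (x (h b)) (x (h b1)))) ∨
      (min (x (h b)) (x (h b1)) ≤ min (x (h a)) (x (h a1)) ∧
        max (x (h a)) (x (h a1)) ≤ max (x (h b)) (x (h b1)) ∧
        ¬(min (x (h a)) (x (h a1)) = min (x (h b)) (x (h b1)) ∧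
          max (x (h a)) (x (h a1)) = max (x (h b)) (x (h b1)))) := by
    intro h hm a a1 b b1 ha1 hb1 hab hne
    have d1 := lemA h hm a a1 b ha1 hab
    have d2 := lemA h hm a a1 b1 ha1 (by omega)
    rcases d1 with ⟨d1a, d1b⟩ | ⟨d1a, d1b⟩ <;> rcases d2 with ⟨d2a, d2b⟩ | ⟨d2a, d2b⟩
    · exact Or.inr (Or.inl (max_le (le_min d1a d1b) (le_min d2a d2b)))
    · refine Or.inr (Or.inr (Or.inr ⟨?_, ?_, hne⟩))
      · exact le_trans (min_le_left _ _) (le_min d1a d1b)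
      · exact le_trans (max_le d2a d2b) (le_max_right _ _)
    · refine Or.inr (Or.inr (Or.inr ⟨?_, ?_, hne⟩))
      · exact le_trans (min_le_right _ _) (le_min d2a d2b)
      · exact le_trans (max_le d1a d1b) (le_max_left _ _)
    · exact Or.inl (le_min (max_le d1a d1b) (max_le d2a d2b))

  have hAdj : ∀ u v : V, (SimpleGraph.fromRel (fun u v =>
      (∃ a b : Fin N, (b : ℕ) = (a : ℕ) + 1 ∧ h1 a = u ∧ h1 b = v) ∨
      (∃ a b : Fin N, (b : ℕ) = (a : ℕ) + 1 ∧ h2 a = u ∧ h2 b = v))).Adj u v →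
      u ≠ v ∧ (pathEdge h1 u v ∨ pathEdge h2 u v) := by
    intro u v huv
    rw [SimpleGraph.fromRel_adj] at huv
    obtain ⟨hne, h⟩ := huv
    refine ⟨hne, ?_⟩
    rcases h with (⟨a, b, hb, hu, hv⟩ | ⟨a, b, hb, hu, hv⟩) |
      (⟨a, b, hb, hu, hv⟩ | ⟨a, b, hb, hu, hv⟩)
    · exact Or.inl ⟨a, b, hb, Or.inl ⟨hu, hv⟩⟩
    · exact Or.inr ⟨a, b, hb, Or.inl ⟨hu, hv⟩⟩
    · exact Or.inl ⟨a, b, hb, Or.inr ⟨hu, hv⟩⟩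
    · exact Or.inr ⟨a, b, hb, Or.inr ⟨hu, hv⟩⟩
  unfold IsPlanar
  refine ⟨fun v => (x v, 0),
    fun u v => semiArc (x u) (x v) (if pathEdge h1 u v then 1 else -1), ?_, ?_, ?_, ?_⟩
  · intro u v h
    exact hxinj (congrArg Prod.fst h)
  · intro u v huv
    obtain ⟨hne, _⟩ := hAdj u v huv
    have hxne : x u ≠ x v := fun h => hne (hxinj h)
    exact ⟨semiArc_cont _ _ _, semiArc_zero _ _ _, semiArc_one _ _ _,
      semiArc_injOn _ _ _ hxne⟩
  · intro u v w huv hwu hwv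
    rintro ⟨t, ht, heq⟩
    obtain ⟨hne, _⟩ := hAdj u v huv
    have hxne : x u ≠ x v := fun h => hne (hxinj h)
    have hsor : (if pathEdge h1 u v then (1:ℝ) else -1) = 1 ∨
        (if pathEdge h1 u v then (1:ℝ) else -1) = -1 := by
      split
      · exact Or.inl rfl
      · exact Or.inr rfl
    simp only at heq
    have e := semiArc_eq (x u) (x v) _ t hsor
    rw [heq] at e
    simp only at e
    have e' : ((x w) - min (x u) (x v)) * (max (x u) (x v) - (x w)) = 0 := by
      rw [e]; norm_num
    have hX : x w = x u ∨ x w = x v := by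
      apply memlem
      rcases mul_eq_zero.mp e' with h | h
      · exact Or.inl (sub_eq_zero.mp h)
      · exact Or.inr (sub_eq_zero.mp h).symm
    rcases hX with h | h
    · exact hwu (hxinj h)
    · exact hwv (hxinj h)
  · intro u v u' v' huv huv' hnePair s hs t ht heq
    obtain ⟨hne, hE⟩ := hAdj u v huv
    obtain ⟨hne', hE'⟩ := hAdj u' v' huv'
    have hxne : x u ≠ x v := fun h => hne (hxinj h)
    have hxne' : x u' ≠ x v' := fun h => hne' (hxinj h)
    have hsor : ∀ p q : V, (if pathEdge h1 p q then (1:ℝ) else -1) = 1 ∨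
        (if pathEdge h1 p q then (1:ℝ) else -1) = -1 := by
      intro p q
      split
      · exact Or.inl rfl
      · exact Or.inr rfl
    simp only at heq ⊢
    have eA := semiArc_eq (x u) (x v) (if pathEdge h1 u v then (1:ℝ) else -1) s (hsor u v)
    have eB := semiArc_eq (x u') (x v') (if pathEdge h1 u' v' then (1:ℝ) else -1) t
      (hsor u' v')
    rw [← heq] at eB
    set P : ℝ × ℝ := semiArc (x u) (x v) (if pathEdge h1 u v then (1:ℝ) else -1) s
      with hPdef
    have finish2 : P.2 = 0 → (P.1 = x u ∨ P.1 = x v) → (P.1 = x u' ∨ P.1 = x v') →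
        ∃ w, (w = u ∨ w = v) ∧ (w = u' ∨ w = v') ∧ P = (x w, 0) := by
      intro hY hA hB
      rcases hA with hA | hA <;> rcases hB with hB | hB
      · exact ⟨u, Or.inl rfl, Or.inl (hxinj (hA.symm.trans hB)),
          Prod.ext hA hY⟩
      · exact ⟨u, Or.inl rfl, Or.inr (hxinj (hA.symm.trans hB)),
          Prod.ext hA hY⟩
      · exact ⟨v, Or.inr rfl, Or.inl (hxinj (hA.symm.trans hB)),
          Prod.ext hA hY⟩
      · exact ⟨v, Or.inr rfl, Or.inr (hxinj (hA.symm.trans hB)),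
          Prod.ext hA hY⟩
    have edgework : ∀ (h : Fin N ≃ V),
        (∀ a b : Fin N, (a : ℕ) < (b : ℕ) → c (h a) = c (h b) →
          (h1.symm (h a) : ℕ) < (h1.symm (h b) : ℕ)) →
        pathEdge h u v → pathEdge h u' v' →
        P.2 = 0 ∧ (P.1 = x u ∨ P.1 = x v) ∧ (P.1 = x u' ∨ P.1 = x v') := by
      intro h hm he he'
      obtain ⟨a, a1, ha1, hor⟩ := he
      obtain ⟨b, b1, hb1, hor'⟩ := he'
      have t1 : min (x u) (x v) = min (x (h a)) (x (h a1)) ∧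
          max (x u) (x v) = max (x (h a)) (x (h a1)) ∧
          ({u, v} : Set V) = {h a, h a1} := by
        rcases hor with ⟨rfl, rfl⟩ | ⟨rfl, rfl⟩
        · exact ⟨rfl, rfl, rfl⟩
        · exact ⟨min_comm _ _, max_comm _ _, Set.pair_comm _ _⟩
      have t2 : min (x u') (x v') = min (x (h b)) (x (h b1)) ∧
          max (x u') (x v') = max (x (h b)) (x (h b1)) ∧
          ({u', v'} : Set V) = {h b, h b1} := by
        rcases hor' with ⟨rfl, rfl⟩ | ⟨rfl, rfl⟩
        · exact ⟨rfl, rfl, rfl⟩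
        · exact ⟨min_comm _ _, max_comm _ _, Set.pair_comm _ _⟩
      have hab : (a : ℕ) ≠ (b : ℕ) := by
        intro hab
        have ha : a = b := Fin.ext hab
        have ha' : a1 = b1 := Fin.ext (by omega)
        apply hnePair
        rw [t1.2.2, t2.2.2, ha, ha']
      have hneMM : ¬(min (x (h a)) (x (h a1)) = min (x (h b)) (x (h b1)) ∧
          max (x (h a)) (x (h a1)) = max (x (h b)) (x (h b1))) := by
        rintro ⟨e1, e2⟩
        rw [← t1.1, ← t2.1] at e1
        rw [← t1.2.1, ← t2.2.1] at e2
        rcases pairlem _ _ _ _ e1 e2 with ⟨g1, g2⟩ | ⟨g1, g2⟩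
        · exact hnePair (by rw [hxinj g1, hxinj g2])
        · exact hnePair (by rw [hxinj g1, hxinj g2, Set.pair_comm])
      have eA' : (P.1 - min (x (h a)) (x (h a1))) *
          (max (x (h a)) (x (h a1)) - P.1) = P.2 ^ 2 := by
        rw [← t1.1, ← t1.2.1]; exact eA
      have eB' : (P.1 - min (x (h b)) (x (h b1))) *
          (max (x (h b)) (x (h b1)) - P.1) = P.2 ^ 2 := by
        rw [← t2.1, ← t2.2.1]; exact eB
      have hlo : min (x (h a)) (x (h a1)) < max (x (h a)) (x (h a1)) := by
        rw [← t1.1, ← t1.2.1]; exact min_lt_max.mpr hxne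
      have hlo' : min (x (h b)) (x (h b1)) < max (x (h b)) (x (h b1)) := by
        rw [← t2.1, ← t2.2.1]; exact min_lt_max.mpr hxne'
      rcases lt_or_gt_of_ne hab with hl | hl
      · have hsep := hsepL h hm a a1 b b1 ha1 hb1 hl hneMM
        obtain ⟨hY, hXA, hXB⟩ := circle_key _ _ _ _ P.1 P.2 hlo hlo' eA' eB' (by tauto)
        rw [← t1.1, ← t1.2.1] at hXA
        rw [← t2.1, ← t2.2.1] at hXB
        exact ⟨hY, memlem _ _ _ hXA, memlem _ _ _ hXB⟩
      · have hsep := hsepL h hm b b1 a a1 hb1 ha1 hl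
          (by rintro ⟨e1, e2⟩; exact hneMM ⟨e1.symm, e2.symm⟩)
        obtain ⟨hY, hXB, hXA⟩ := circle_key _ _ _ _ P.1 P.2 hlo' hlo eB' eA' (by tauto)
        rw [← t1.1, ← t1.2.1] at hXA
        rw [← t2.1, ← t2.2.1] at hXB
        exact ⟨hY, memlem _ _ _ hXA, memlem _ _ _ hXB⟩
    by_cases hc1 : pathEdge h1 u v <;> by_cases hc2 : pathEdge h1 u' v'
    · obtain ⟨hY, hA, hB⟩ := edgework h1 hm1 hc1 hc2
      exact finish2 hY hA hB
    · -- mixed: upper / lower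
      rw [if_neg hc2] at heq
      have hgeq : 0 ≤ P.2 := by
        rw [hPdef, if_pos hc1]
        exact semiArc_sign_pos (x u) (x v) s hs
      have hleq : P.2 ≤ 0 := by
        rw [heq]
        exact semiArc_sign_neg (x u') (x v') t ht
      have hY : P.2 = 0 := le_antisymm hleq hgeq
      have eA0 : (P.1 - min (x u) (x v)) * (max (x u) (x v) - P.1) = 0 := by
        rw [eA, hY]; norm_num
      have eB0 : (P.1 - min (x u') (x v')) * (max (x u') (x v') - P.1) = 0 := by
        rw [eB, hY]; norm_num
      refine finish2 hY (memlem _ _ _ ?_) (memlem _ _ _ ?_)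
      · rcases mul_eq_zero.mp eA0 with h | h
        · exact Or.inl (sub_eq_zero.mp h)
        · exact Or.inr (sub_eq_zero.mp h).symm
      · rcases mul_eq_zero.mp eB0 with h | h
        · exact Or.inl (sub_eq_zero.mp h)
        · exact Or.inr (sub_eq_zero.mp h).symm
    · -- mixed: lower / upper
      rw [if_pos hc2] at heq
      have hgeq : 0 ≤ P.2 := by
        rw [heq]
        exact semiArc_sign_pos (x u') (x v') t ht
      have hleq : P.2 ≤ 0 := by
        rw [hPdef, if_neg hc1]
        exact semiArc_sign_neg (x u) (x v) s hs
      have hY : P.2 = 0 := le_antisymm hleq hgeq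
      have eA0 : (P.1 - min (x u) (x v)) * (max (x u) (x v) - P.1) = 0 := by
        rw [eA, hY]; norm_num
      have eB0 : (P.1 - min (x u') (x v')) * (max (x u') (x v') - P.1) = 0 := by
        rw [eB, hY]; norm_num
      refine finish2 hY (memlem _ _ _ ?_) (memlem _ _ _ ?_)
      · rcases mul_eq_zero.mp eA0 with h | h
        · exact Or.inl (sub_eq_zero.mp h)
        · exact Or.inr (sub_eq_zero.mp h).symm
      · rcases mul_eq_zero.mp eB0 with h | h
        · exact Or.inl (sub_eq_zero.mp h)
        · exact Or.inr (sub_eq_zero.mp h).symm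
    · -- both lower: both are h2 edges
      have he2 : pathEdge h2 u v := by
        rcases hE with h | h
        · exact absurd h hc1
        · exact h
      have he2' : pathEdge h2 u' v' := by
        rcases hE' with h | h
        · exact absurd h hc2
        · exact h
      obtain ⟨hY, hA, hB⟩ := edgework h2 hm2 he2 he2'
      exact finish2 hY hA hB
end

section
/- Given a text τ of length n and pattern π of length k, define a binary CSP with variables x₁,…,x_k, domain [n], and for each edge of the incidence graph G_π a constraint encoding the corresponding order condition on τ. Then the CSP has a solution with x₁ < x₂ < ⋯ < x_k (assignments forming a strictly increasing index sequence) if and only if τ contains π; moreover any solution of the CSP is automatically strictly increasing in the index order. -/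
/-- Solutions of the binary CSP obtained from a PPM instance: for every edge of
the incidence graph of π (index-consecutive or value-consecutive pairs), the
relative position (in both coordinates) of the two assigned text points matches
that of the two pattern points. -/
def IsCSPSolution {n k : ℕ} (τ : Equiv.Perm (Fin n)) (π : Equiv.Perm (Fin k))
    (f : Fin k → Fin n) : Prop :=
  (∀ j j' : Fin k, (j' : ℕ) = (j : ℕ) + 1 →
    f j < f j' ∧ (π j < π j' ↔ τ (f j) < τ (f j'))) ∧
  (∀ j j' : Fin k, (π j' : ℕ) = (π j : ℕ) + 1 →
    τ (f j) < τ (f j') ∧ (j < j' ↔ f j < f j'))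

lemma strictMono_of_succ_lt {k : ℕ} {α : Type*} [Preorder α] (F : Fin k → α)
    (h : ∀ j j' : Fin k, (j' : ℕ) = (j : ℕ) + 1 → F j < F j') : StrictMono F := by
  intro a b hab
  have hab' : (a : ℕ) < b := hab
  obtain ⟨d, hd⟩ : ∃ d, (b : ℕ) = (a : ℕ) + d + 1 := ⟨(b : ℕ) - a - 1, by omega⟩
  clear hab hab'
  induction d generalizing b with
  | zero => exact h a b (by omega)
  | succ d ih =>
      have hb : (a : ℕ) + d + 1 < k := by omega
      have h1 := ih (b := ⟨(a : ℕ) + d + 1, hb⟩) (by simp)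
      exact h1.trans (h ⟨(a : ℕ) + d + 1, hb⟩ b (by simp; omega))

/-- the CSP has a solution with strictly increasing assignment
iff τ contains π; moreover every CSP solution is automatically strictly
increasing in the index order. -/
theorem csp_iff_contains (n k : ℕ)
    (τ : Equiv.Perm (Fin n)) (π : Equiv.Perm (Fin k)) :
    ((∃ f : Fin k → Fin n, IsCSPSolution τ π f ∧ StrictMono f) ↔
      (∃ g : Fin k → Fin n, StrictMono g ∧
        ∀ a b : Fin k, π a < π b ↔ τ (g a) < τ (g b)))
    ∧ (∀ f : Fin k → Fin n, IsCSPSolution τ π f → StrictMono f) := by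
  have key : ∀ f, IsCSPSolution τ π f → StrictMono f := fun f hf =>
    strictMono_of_succ_lt f (fun j j' h => (hf.1 j j' h).1)
  refine ⟨⟨?_, ?_⟩, key⟩
  · rintro ⟨f, hf, -⟩
    refine ⟨f, key f hf, ?_⟩
    have hmono : StrictMono (fun v : Fin k => τ (f (π.symm v))) := by
      apply strictMono_of_succ_lt
      intro v v' hv
      have := (hf.2 (π.symm v) (π.symm v') (by simp [hv])).1
      simpa using this
    intro a b
    have := hmono.lt_iff_lt (a := π a) (b := π b)
    simp only [Equiv.symm_apply_apply] at this
    exact this.symm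
  · rintro ⟨g, hg, hpat⟩
    refine ⟨g, ⟨?_, ?_⟩, hg⟩
    · intro j j' h
      exact ⟨hg (Fin.lt_def.mpr (by omega)), hpat j j'⟩
    · intro j j' h
      have hlt : π j < π j' := Fin.lt_def.mpr (by omega)
      refine ⟨(hpat j j').1 hlt, fun h => hg h, fun h => ?_⟩
      by_contra hc
      push_neg at hc
      exact absurd h (not_lt.mpr (hg.monotone hc))
end
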